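/- Base-free form of the vertex operator at t = 1 (Γ_1 = (Σ_i U_{(i)})(Σ_j (−1)^j D_{(1^j)})): let α = (α_1 ≥ ⋯ ≥ α_l > 0) be a partition. In the ring of formal power series in x_1, …, x_m, the following identity holds: Σ_{n ≥ −l} s_{(n, α_1, …, α_l)}(x) = ( Σ_{i ≥ 0} h_i(x) ) · ( Σ_{j=0}^{l} (−1)^j Σ_μ s_μ(x) ), where the inner sum ranges over all partitions μ ⊆ α with α/μ a vertical strip of size j. (The left side is a well-defined power series since s_{(n,α)} is homogeneous of degree |α| + n, with a different degree for each n.) -/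

import Mathlib

open MvPolynomial

open scoped Classical

/-- The complete homogeneous symmetric polynomial `h_k` indexed by an integer,
with the convention `h_0 = 1` and `h_k = 0` for `k < 0`. -/
noncomputable def hInt (σ : Type*) [Fintype σ] [DecidableEq σ] (R : Type*) [CommRing R]
    (k : ℤ) : MvPolynomial σ R :=
  if 0 ≤ k then hsymm σ R k.toNat else 0

/-- The Jacobi–Trudi polynomial `s_α = det (h_{α_i + j - i})` of an arbitrary integer
sequence `α`, in the variables indexed by `σ`. -/
noncomputable def jacobiTrudi (σ : Type*) [Fintype σ] [DecidableEq σ] (R : Type*) [CommRing R]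
    {l : ℕ} (α : Fin l → ℤ) : MvPolynomial σ R :=
  Matrix.det (Matrix.of fun i j : Fin l => hInt σ R (α i + (j : ℕ) - (i : ℕ)))

/-- `λ/μ` is a vertical strip: `λ_i - μ_i ∈ {0, 1}` for every `i`. -/
def IsVerticalStrip {l : ℕ} (lam μ : Fin l → ℕ) : Prop :=
  ∀ i, μ i ≤ lam i ∧ lam i ≤ μ i + 1

/-!
Expanding `s_{(n,α)}` along its first row gives `Σ_c (-1)^c h_{n+c} · m_c`, where `m_c` is the
minor with column `c` deleted. Reading `Σ_c X^c m_c` as the determinant of the Jacobi–Trudi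
rows of `α` bordered by the row `((-X)^c)_c`, and clearing that row by column operations, shows
`m_c = Σ_{|S| = c} s_{α - 1_S}`. For a partition `α` with positive parts, `s_{α - 1_S}` vanishes
unless `α - 1_S` is again a partition (otherwise two rows coincide), so `m_c` is the sum of `s_μ`
over the vertical `c`-strips `α/μ`. Summing over `n` and comparing degrees at a monomial of degree
`D`, only `h_i` with `i ≤ D` contribute.
-/

namespace MvPolynomial

variable {σ R : Type*} [CommRing R]

theorem isHomogeneous_multiset_prod_X (s : Multiset σ) :
    (s.map (X : σ → MvPolynomial σ R)).prod.IsHomogeneous (Multiset.card s) := by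
  induction s using Multiset.induction with
  | empty => simpa using isHomogeneous_one σ R
  | cons a s ih => simpa [add_comm] using (isHomogeneous_X R a).mul ih

theorem isHomogeneous_hsymm [Fintype σ] [DecidableEq σ] (n : ℕ) :
    (hsymm σ R n).IsHomogeneous n :=
  IsHomogeneous.sum _ _ _ fun s _ => by simpa [s.2] using isHomogeneous_multiset_prod_X (R := R) s.1

theorem IsHomogeneous.coeff_mul_eq_zero_of_degree_lt {P : MvPolynomial σ R} {n : ℕ}
    (hP : P.IsHomogeneous n) {d : σ →₀ ℕ} (hd : d.degree < n) (Q : MvPolynomial σ R) :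
    coeff d (P * Q) = 0 := by
  refine (coeff_mul P Q d).trans (Finset.sum_eq_zero fun ab hab => ?_)
  rw [Finset.HasAntidiagonal.mem_antidiagonal] at hab
  have hle : ab.1.degree ≤ d.degree := Finsupp.degree_mono (hab ▸ le_self_add)
  rw [hP.coeff_eq_zero (by omega), zero_mul]

theorem coeff_sum_hsymm_mul_of_degree_le [Fintype σ] [DecidableEq σ] {d : σ →₀ ℕ} {N : ℕ}
    (hN : d.degree ≤ N) (Q : MvPolynomial σ R) :
    coeff d ((∑ k ∈ Finset.range (N + 1), hsymm σ R k) * Q) =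
      coeff d ((∑ k ∈ Finset.range (d.degree + 1), hsymm σ R k) * Q) := by
  obtain ⟨c, rfl⟩ := Nat.exists_eq_add_of_le hN
  have htail : ∀ k ∈ Finset.range c, coeff d (hsymm σ R (d.degree + 1 + k) * Q) = 0 :=
    fun k _ => (isHomogeneous_hsymm _).coeff_mul_eq_zero_of_degree_lt (by omega) Q
  rw [add_right_comm, Finset.sum_range_add, add_mul, coeff_add, add_eq_left, Finset.sum_mul,
    coeff_sum]
  exact Finset.sum_eq_zero htail

end MvPolynomial

namespace Matrix

variable {A : Type*} [CommRing A]

theorem det_add_smul_eq_sum {n : Type*} [Fintype n] [DecidableEq n] (u v : Matrix n n A) (t : A) :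
    (v + t • u).det =
      ∑ S : Finset n, t ^ S.card * (of fun p => if p ∈ S then u p else v p).det := by
  let w : Finset n → n → n → A := fun S => S.piecewise u v
  have hpiece (S : Finset n) :
      S.piecewise (t • u : n → n → A) v = S.piecewise (fun p => t • w S p) (w S) := by
    ext p q
    by_cases hp : p ∈ S <;> simp [Finset.piecewise, w, hp]
  rw [add_comm]
  refine (detRowAlternating.map_add_univ (t • u : n → n → A) v).trans
    (Finset.sum_congr rfl fun S _ => ?_)
  rw [hpiece, ← AlternatingMap.coe_multilinearMap, MultilinearMap.map_piecewise_smul,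
    Finset.prod_const, smul_eq_mul]
  rfl

open Polynomial

variable {l : ℕ}

noncomputable def borderNegXPow (M : Matrix (Fin l) (Fin (l + 1)) A) :
    Matrix (Fin (l + 1)) (Fin (l + 1)) A[X] :=
  of (Fin.cons (fun c => (-Polynomial.X) ^ (c : ℕ)) fun p c => Polynomial.C (M p c))

theorem det_borderNegXPow_eq_sum (M : Matrix (Fin l) (Fin (l + 1)) A) :
    (borderNegXPow M).det =
      ∑ c : Fin (l + 1),
        Polynomial.X ^ (c : ℕ) * Polynomial.C (M.submatrix id c.succAbove).det := by
  rw [det_succ_row_zero]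
  refine Finset.sum_congr rfl fun c _ => ?_
  have hminor : (borderNegXPow M).submatrix Fin.succ c.succAbove =
      Polynomial.C.mapMatrix (M.submatrix id c.succAbove) := by
    ext p q; simp [borderNegXPow]
  rw [hminor, ← RingHom.map_det]
  simp [borderNegXPow, ← mul_pow]

theorem det_borderNegXPow_eq_det_add (M : Matrix (Fin l) (Fin (l + 1)) A) :
    (borderNegXPow M).det = ((M.submatrix id Fin.succ).map Polynomial.C +
      (Polynomial.X : A[X]) • (M.submatrix id Fin.castSucc).map Polynomial.C).det := by
  set N := borderNegXPow M
  -- right multiplication by `U` adds `X` times each column to the next, clearing the top row of `N`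
  let U : Matrix (Fin (l + 1)) (Fin (l + 1)) A[X] :=
    of fun k c => (if k = c then 1 else 0) + if (k : ℕ) + 1 = c then Polynomial.X else 0
  have hU : U.det = 1 := by
    have hUtri : U.BlockTriangular id := fun k c (hck : c < k) => by
      simp [U, hck.ne', show (k : ℕ) + 1 ≠ c by omega]
    simp [det_of_isUpperTriangular hUtri, U]
  have hNU_zero (r : Fin (l + 1)) : (N * U) r 0 = N r 0 := by
    simp [mul_apply, U]
  have hNU_succ (r : Fin (l + 1)) (q : Fin l) :
      (N * U) r q.succ = N r q.succ + N r q.castSucc * Polynomial.X := by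
    have hshift (k : Fin (l + 1)) : (k : ℕ) = q ↔ k = q.castSucc := by
      simp [Fin.ext_iff]
    simp [mul_apply, U, mul_add, Finset.sum_add_distrib, hshift]
  have hrow (c : Fin l) : (N * U) 0 c.succ = 0 := by
    rw [hNU_succ]; simp [N, borderNegXPow, pow_succ]
  have hminor : (N * U).submatrix Fin.succ (Fin.succAbove 0) =
      (M.submatrix id Fin.succ).map Polynomial.C +
        (Polynomial.X : A[X]) • (M.submatrix id Fin.castSucc).map Polynomial.C := by
    ext p q : 1
    rw [submatrix_apply, Fin.succAbove_zero, hNU_succ]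
    simp [N, borderNegXPow]
  rw [← mul_one N.det, ← hU, ← det_mul, det_succ_row_zero, Fin.sum_univ_succ,
    Finset.sum_eq_zero fun c _ => by rw [hrow, mul_zero, zero_mul], add_zero, hNU_zero, hminor]
  simp [N, borderNegXPow]

theorem det_submatrix_succAbove_eq_sum (M : Matrix (Fin l) (Fin (l + 1)) A) (j : Fin (l + 1)) :
    (M.submatrix id j.succAbove).det =
      ∑ S ∈ Finset.univ.filter (fun S : Finset (Fin l) => S.card = j),
        (of fun p q => if p ∈ S then M p q.castSucc else M p q.succ).det := by
  have hgen : ∑ c : Fin (l + 1),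
      Polynomial.X ^ (c : ℕ) * Polynomial.C (M.submatrix id c.succAbove).det =
      ∑ S : Finset (Fin l), Polynomial.X ^ S.card *
        Polynomial.C (of fun p q => if p ∈ S then M p q.castSucc else M p q.succ).det := by
    rw [← det_borderNegXPow_eq_sum, det_borderNegXPow_eq_det_add, det_add_smul_eq_sum]
    refine Finset.sum_congr rfl fun S _ => ?_
    rw [RingHom.map_det]
    congr 2
    ext p q
    by_cases hp : p ∈ S <;> simp [hp]
  simpa [Polynomial.finsetSum_coeff, Polynomial.coeff_X_pow_mul', Polynomial.coeff_C,
    Finset.sum_filter, Fin.val_inj, eq_comm]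
    using congrArg (Polynomial.coeff · j) hgen

end Matrix

theorem Fin.exists_succ_lt_of_not_antitone {β : Type*} [LinearOrder β] {l : ℕ}
    {f : Fin l → β} (hf : ¬ Antitone f) : ∃ i j : Fin l, (j : ℕ) = i + 1 ∧ f i < f j := by
  cases l with
  | zero => exact absurd (fun i => i.elim0) hf
  | succ l =>
    rw [Fin.antitone_iff_succ_le] at hf
    simp only [not_forall, not_le] at hf
    obtain ⟨i, hi⟩ := hf
    exact ⟨i.castSucc, i.succ, rfl, hi⟩

noncomputable def verticalStripSum (σ : Type*) [Fintype σ] [DecidableEq σ] (R : Type*)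
    [CommRing R] {l : ℕ} (α : Fin l → ℕ) (j : ℕ) : MvPolynomial σ R :=
  ∑ μ ∈ (Finset.Iic α).filter
      (fun μ => Antitone μ ∧ IsVerticalStrip α μ ∧ (∑ i, (α i - μ i)) = j),
    jacobiTrudi σ R (fun i => (μ i : ℤ))

section JacobiTrudi

variable {σ : Type*} [Fintype σ] [DecidableEq σ] {R : Type*} [CommRing R]

theorem hInt_of_neg {k : ℤ} (hk : k < 0) : hInt σ R k = 0 := if_neg (not_le.mpr hk)

theorem hInt_natCast (n : ℕ) : hInt σ R n = hsymm σ R n := by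
  simp [hInt]

theorem jacobiTrudi_eq_zero_of_eq_add_one {l : ℕ} {β : Fin l → ℤ} {i j : Fin l}
    (hij : (j : ℕ) = i + 1) (hβ : β j = β i + 1) : jacobiTrudi σ R β = 0 := by
  refine Matrix.det_zero_of_row_eq (i := i) (j := j) (fun h => by simp [h] at hij) ?_
  funext q
  simp only [Matrix.of_apply, hij, hβ]
  congr 1
  push_cast
  ring

theorem jacobiTrudi_cons_eq_sum {l : ℕ} (n : ℤ) (β : Fin l → ℤ) :
    jacobiTrudi σ R (Fin.cons n β) =
      ∑ c : Fin (l + 1), (-1) ^ (c : ℕ) * hInt σ R (n + c) *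
        ∑ S ∈ Finset.univ.filter (fun S : Finset (Fin l) => S.card = c),
          jacobiTrudi σ R (fun p => β p - if p ∈ S then 1 else 0) := by
  let M : Matrix (Fin l) (Fin (l + 1)) (MvPolynomial σ R) :=
    Matrix.of fun p c => hInt σ R (β p + c - (p + 1))
  rw [jacobiTrudi, Matrix.det_succ_row_zero]
  refine Finset.sum_congr rfl fun c _ => ?_
  have hminor : (Matrix.of fun i j : Fin (l + 1) =>
      hInt σ R ((Fin.cons n β : Fin (l + 1) → ℤ) i + (j : ℕ) - (i : ℕ))).submatrix
        Fin.succ c.succAbove = M.submatrix id c.succAbove := by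
    ext p q
    simp [M, Fin.val_succ]
  rw [hminor, Matrix.det_submatrix_succAbove_eq_sum]
  simp only [Matrix.of_apply, Fin.cons_zero, Fin.val_zero, CharP.cast_eq_zero, sub_zero]
  congr 1
  refine Finset.sum_congr rfl fun S _ => congrArg Matrix.det (Matrix.ext fun p q => ?_)
  by_cases hp : p ∈ S <;> simp only [M, hp, Matrix.of_apply, if_true, if_false, Fin.val_castSucc,
    Fin.val_succ] <;> congr 1 <;> push_cast <;> ring

theorem jacobiTrudi_sub_indicator_eq_zero_of_not_antitone {l : ℕ} {α : Fin l → ℕ}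
    (hα : Antitone α) (hpos : ∀ i, 0 < α i) {S : Finset (Fin l)}
    (hS : ¬ Antitone fun p => α p - if p ∈ S then 1 else 0) :
    jacobiTrudi σ R (fun p => (α p : ℤ) - if p ∈ S then 1 else 0) = 0 := by
  obtain ⟨i, j, hij, hlt⟩ := Fin.exists_succ_lt_of_not_antitone hS
  refine jacobiTrudi_eq_zero_of_eq_add_one hij ?_
  have := hα (show i ≤ j by simp [Fin.le_def, hij])
  have := hpos i
  split_ifs at hlt ⊢ <;> omega

theorem sum_jacobiTrudi_sub_indicator_eq_verticalStripSum {l : ℕ} {α : Fin l → ℕ} (hα : Antitone α)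
    (hpos : ∀ i, 0 < α i) (c : ℕ) :
    ∑ S ∈ Finset.univ.filter (fun S : Finset (Fin l) => S.card = c),
        jacobiTrudi σ R (fun p => (α p : ℤ) - if p ∈ S then 1 else 0) =
      verticalStripSum σ R α c := by
  let μ : Finset (Fin l) → Fin l → ℕ := fun S p => α p - if p ∈ S then 1 else 0
  have hμ_cast (S : Finset (Fin l)) (p : Fin l) :
      ((μ S p : ℕ) : ℤ) = α p - if p ∈ S then 1 else 0 := by
    have := hpos p
    simp only [μ]
    split_ifs <;> omega
  have hμ_sub (S : Finset (Fin l)) (p : Fin l) : α p - μ S p = if p ∈ S then 1 else 0 := by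
    have := hpos p
    simp only [μ]
    split_ifs <;> omega
  have hμ_strip {ν : Fin l → ℕ} (hν : IsVerticalStrip α ν) :
      μ (Finset.univ.filter fun p => ν p ≠ α p) = ν := by
    funext p
    have := hν p
    simp only [μ, Finset.mem_filter, Finset.mem_univ, true_and]
    split_ifs <;> omega
  have hstrip {ν : Fin l → ℕ} (hν : IsVerticalStrip α ν) (p : Fin l) :
      α p - ν p = if ν p ≠ α p then 1 else 0 := by
    have := hν p
    split_ifs <;> omega
  rw [← Finset.sum_filter_of_ne fun S _ hS =>
    not_not.mp (mt (jacobiTrudi_sub_indicator_eq_zero_of_not_antitone hα hpos) hS),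
    verticalStripSum]
  refine Finset.sum_nbij' μ (fun ν => Finset.univ.filter fun p => ν p ≠ α p) ?_ ?_ ?_ ?_ ?_
  · intro S hS
    simp only [Finset.mem_filter, Finset.mem_univ, true_and] at hS
    simp only [Finset.mem_filter, Finset.mem_Iic, hμ_sub]
    refine ⟨fun p => Nat.sub_le _ _, hS.2, fun p => ⟨Nat.sub_le _ _, ?_⟩, ?_⟩
    · have := hμ_sub S p
      split_ifs at this <;> omega
    · simp [hS.1]
  · intro ν hν
    simp only [Finset.mem_filter, Finset.mem_Iic] at hν
    obtain ⟨-, hanti, hν, hsum⟩ := hν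
    refine Finset.mem_filter.mpr ⟨?_, ?_⟩
    · simp [Finset.card_filter, ← hsum, hstrip hν]
    · change Antitone (μ _)
      rwa [hμ_strip hν]
  · intro S _
    ext p
    have := hpos p
    simp only [μ, Finset.mem_filter, Finset.mem_univ, true_and]
    split_ifs with hp <;> simp only [hp, iff_true, iff_false] <;> omega
  · intro ν hν
    exact hμ_strip (Finset.mem_filter.mp hν).2.2.1
  · intro S _
    simp only [hμ_cast]

theorem jacobiTrudi_cons_eq_sum_verticalStripSum {l : ℕ} {α : Fin l → ℕ} (hα : Antitone α)
    (hpos : ∀ i, 0 < α i) (n : ℤ) :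
    jacobiTrudi σ R (Fin.cons n fun i => (α i : ℤ)) =
      ∑ c ∈ Finset.range (l + 1),
        (-1) ^ c * hInt σ R (n + c) * verticalStripSum σ R α c := by
  rw [jacobiTrudi_cons_eq_sum, ← Fin.sum_univ_eq_sum_range]
  simp only [sum_jacobiTrudi_sub_indicator_eq_verticalStripSum hα hpos]

theorem sum_range_hInt_sub_add {c l : ℕ} (hc : c ≤ l) (D : ℕ) :
    ∑ j ∈ Finset.range (D + l + 1), hInt σ R ((j : ℤ) - l + c) =
      ∑ k ∈ Finset.range (D + c + 1), hsymm σ R k := by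
  obtain ⟨e, rfl⟩ := Nat.exists_eq_add_of_le hc
  have hneg : ∀ j ∈ Finset.range e, hInt σ R ((j : ℤ) - (c + e : ℕ) + c) = 0 :=
    fun j hj => hInt_of_neg (by simp at hj; omega)
  rw [show D + (c + e) + 1 = e + (D + c + 1) by omega, Finset.sum_range_add,
    Finset.sum_eq_zero hneg, zero_add]
  refine Finset.sum_congr rfl fun k _ => ?_
  rw [← hInt_natCast]
  congr 1
  push_cast
  ring

end JacobiTrudi

/-- Stated coefficientwise: at a monomial `d` of total degree `D` only the summands
`n = j - l` with `j ≤ D + l` and the `h_i` with `i ≤ D` can contribute, so both infinite sums are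
truncated there. -/
theorem vertex_operator_base_free (R : Type*) [CommRing R] (m l : ℕ)
    (α : Fin l → ℕ) (hα : Antitone α) (hpos : ∀ i, 0 < α i)
    (d : Fin m →₀ ℕ) (D : ℕ) (hD : D = d.sum fun _ e => e) :
    (∑ j ∈ Finset.range (D + l + 1),
        coeff d (jacobiTrudi (Fin m) R (Fin.cons ((j : ℤ) - (l : ℤ)) (fun i => (α i : ℤ))))) =
      coeff d
        ((∑ i ∈ Finset.range (D + 1), hsymm (Fin m) R i) *
          ∑ j ∈ Finset.range (l + 1),
            ((-1 : MvPolynomial (Fin m) R) ^ j) *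
              ∑ μ ∈ (Finset.Iic α).filter
                  (fun μ => Antitone μ ∧ IsVerticalStrip α μ ∧ (∑ i, (α i - μ i)) = j),
                jacobiTrudi (Fin m) R (fun i => (μ i : ℤ))) := by
  obtain rfl : D = d.degree := hD
  change _ = coeff d ((∑ i ∈ Finset.range (d.degree + 1), hsymm (Fin m) R i) *
    ∑ c ∈ Finset.range (l + 1), (-1) ^ c * verticalStripSum (Fin m) R α c)
  simp only [jacobiTrudi_cons_eq_sum_verticalStripSum hα hpos, ← coeff_sum]
  rw [Finset.sum_comm, Finset.mul_sum, coeff_sum, coeff_sum]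
  refine Finset.sum_congr rfl fun c hc => ?_
  rw [← Finset.sum_mul, ← Finset.mul_sum, sum_range_hInt_sub_add (by simpa using hc),
    mul_comm ((-1) ^ c), mul_assoc,
    coeff_sum_hsymm_mul_of_degree_le (Nat.le_add_right _ _)]
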